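/- Let λ : n_b → ℝ, let F_k = exp(j·θ_k), and for n ∈ n_b define the n-th component of the angle gradient of the weighted power injection, W_n := j·λ_n·V_n·conj(I_n) − j·conj(V_n)·Σ_i λ_i·V_i·conj(Y_{i n}) (this equals Σ_i λ_i·∂S_i/∂θ_n), regarded as a function of the magnitude vector v. Then for all m, n ∈ n_b, the partial derivative of W_n with respect to the voltage magnitude v_m exists and equals j·[m = n]·λ_n·F_n·conj(I_n) + j·λ_n·V_n·conj(Y_{n m})·conj(F_m) − j·[m = n]·conj(F_n)·Σ_i λ_i·V_i·conj(Y_{i n}) − j·conj(V_n)·λ_m·F_m·conj(Y_{m n}); this is the (m, n) entry of the mixed magnitude–angle Hessian j·diag(v)⁻¹·( diag(conj(V))·(conj(Y)ᵀ·diag(V)·diag(λ) − diag(conj(Y)ᵀ·diag(V)·λ)) − diag(λ)·diag(V)·(conj(Y)·diag(conj(V)) − diag(conj(I))) ). -/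

import Mathlib

open Matrix

/-- Complex bus voltage `V_k = v_k · exp(j θ_k)`. -/
noncomputable def busV {nb : Type*} (v θ : nb → ℝ) (k : nb) : ℂ :=
  (v k : ℂ) * Complex.exp (Complex.I * (θ k : ℂ))

/-- Bus current injection `I_i = Σ_k Y_{i k} V_k`. -/
noncomputable def busI {nb : Type*} [Fintype nb] (Y : Matrix nb nb ℂ)
    (v θ : nb → ℝ) (i : nb) : ℂ :=
  ∑ k, Y i k * busV v θ k

/-- `n`-th component of the angle gradient of the `λ`-weighted power injection:
`W_n = j λ_n V_n conj(I_n) - j conj(V_n) Σ_i λ_i V_i conj(Y_{i n})`. -/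
noncomputable def gradThetaW {nb : Type*} [Fintype nb] (Y : Matrix nb nb ℂ)
    (lam : nb → ℝ) (v θ : nb → ℝ) (n : nb) : ℂ :=
  Complex.I * (lam n : ℂ) * busV v θ n * (starRingEnd ℂ) (busI Y v θ n)
    - Complex.I * (starRingEnd ℂ) (busV v θ n) *
        ∑ i, (lam i : ℂ) * busV v θ i * (starRingEnd ℂ) (Y i n)

/-! Along the `v_m` direction each `V_k` is affine with slope `[m = k] F_k`, so the linear
expressions `I_n` and `Σ_i λ_i V_i conj(Y_{i n})` have slopes `Y_{n m} F_m` and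
`λ_m F_m conj(Y_{m n})`; the product rule applied to the two terms of `W_n` gives the formula. -/

section BusDerivatives

variable {nb : Type*} [DecidableEq nb]

lemma hasDerivAt_busV_update (v θ : nb → ℝ) (m k : nb) :
    HasDerivAt (fun t : ℝ => busV (Function.update v m t) θ k)
      ((if m = k then 1 else 0) * Complex.exp (Complex.I * (θ k : ℂ))) (v m) := by
  unfold busV
  by_cases h : m = k
  · subst h
    simpa using ((hasDerivAt_id (v m)).ofReal_comp).mul_const (Complex.exp (Complex.I * θ m))
  · simpa only [Function.update_of_ne (Ne.symm h), if_neg h, zero_mul] using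
      hasDerivAt_const (v m) _

variable [Fintype nb]

lemma hasDerivAt_sum_mul_busV_update (c : nb → ℂ) (v θ : nb → ℝ) (m : nb) :
    HasDerivAt (fun t : ℝ => ∑ k, c k * busV (Function.update v m t) θ k)
      (c m * Complex.exp (Complex.I * (θ m : ℂ))) (v m) := by
  refine (HasDerivAt.fun_sum (u := Finset.univ)
    fun k _ => (hasDerivAt_busV_update v θ m k).const_mul (c k)).congr_deriv ?_
  simp [mul_ite, ite_mul]

lemma hasDerivAt_busI_update (Y : Matrix nb nb ℂ) (v θ : nb → ℝ) (m n : nb) :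
    HasDerivAt (fun t : ℝ => busI Y (Function.update v m t) θ n)
      (Y n m * Complex.exp (Complex.I * (θ m : ℂ))) (v m) :=
  hasDerivAt_sum_mul_busV_update (Y n) v θ m

lemma hasDerivAt_sum_lam_busV_mul_conj_update (Y : Matrix nb nb ℂ) (lam v θ : nb → ℝ)
    (m n : nb) :
    HasDerivAt
      (fun t : ℝ => ∑ i, (lam i : ℂ) * busV (Function.update v m t) θ i *
        (starRingEnd ℂ) (Y i n))
      ((lam m : ℂ) * Complex.exp (Complex.I * (θ m : ℂ)) * (starRingEnd ℂ) (Y m n)) (v m) := by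
  convert hasDerivAt_sum_mul_busV_update
    (fun i => (lam i : ℂ) * (starRingEnd ℂ) (Y i n)) v θ m using 1
  · exact funext fun t => Finset.sum_congr rfl fun i _ => by ring
  · ring

end BusDerivatives

theorem hasDerivAt_gradThetaW_magnitude_general {nb : Type*} [Fintype nb] [DecidableEq nb]
    (Y : Matrix nb nb ℂ) (lam : nb → ℝ) (v θ : nb → ℝ)
    (m n : nb) :
    HasDerivAt (fun t : ℝ => gradThetaW Y lam (Function.update v m t) θ n)
      (Complex.I * (if m = n then 1 else 0) * (lam n : ℂ) *
          Complex.exp (Complex.I * (θ n : ℂ)) * (starRingEnd ℂ) (busI Y v θ n)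
        + Complex.I * (lam n : ℂ) * busV v θ n * (starRingEnd ℂ) (Y n m) *
            (starRingEnd ℂ) (Complex.exp (Complex.I * (θ m : ℂ)))
        - Complex.I * (if m = n then 1 else 0) *
            (starRingEnd ℂ) (Complex.exp (Complex.I * (θ n : ℂ))) *
            (∑ i, (lam i : ℂ) * busV v θ i * (starRingEnd ℂ) (Y i n))
        - Complex.I * (starRingEnd ℂ) (busV v θ n) * (lam m : ℂ) *
            Complex.exp (Complex.I * (θ m : ℂ)) * (starRingEnd ℂ) (Y m n))
      (v m) := by
  have hV := hasDerivAt_busV_update v θ m n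
  have hI := hasDerivAt_busI_update Y v θ m n
  have hS := hasDerivAt_sum_lam_busV_mul_conj_update Y lam v θ m n
  have hW := ((hV.const_mul (Complex.I * lam n)).fun_mul hI.star).sub
    ((hV.star.const_mul Complex.I).fun_mul hS)
  simp only [Function.update_eq_self] at hW
  refine hW.congr_deriv ?_
  simp only [Complex.star_def, map_mul, apply_ite (starRingEnd ℂ), map_one, map_zero]
  ring

/-- The `(m, n)` entry of the mixed magnitude–angle Hessian: partial derivative
of `W_n` with respect to the voltage magnitude `v_m`, where
`F_k = exp(j θ_k)`. -/
theorem hasDerivAt_gradThetaW_magnitude {nb : Type*} [Fintype nb] [DecidableEq nb]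
    (Y : Matrix nb nb ℂ) (lam : nb → ℝ) (v θ : nb → ℝ)
    (hv : ∀ k, v k ≠ 0) (m n : nb) :
    HasDerivAt (fun t : ℝ => gradThetaW Y lam (Function.update v m t) θ n)
      (Complex.I * (if m = n then 1 else 0) * (lam n : ℂ) *
          Complex.exp (Complex.I * (θ n : ℂ)) * (starRingEnd ℂ) (busI Y v θ n)
        + Complex.I * (lam n : ℂ) * busV v θ n * (starRingEnd ℂ) (Y n m) *
            (starRingEnd ℂ) (Complex.exp (Complex.I * (θ m : ℂ)))
        - Complex.I * (if m = n then 1 else 0) *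
            (starRingEnd ℂ) (Complex.exp (Complex.I * (θ n : ℂ))) *
            (∑ i, (lam i : ℂ) * busV v θ i * (starRingEnd ℂ) (Y i n))
        - Complex.I * (starRingEnd ℂ) (busV v θ n) * (lam m : ℂ) *
            Complex.exp (Complex.I * (θ m : ℂ)) * (starRingEnd ℂ) (Y m n))
      (v m) :=
  hasDerivAt_gradThetaW_magnitude_general Y lam v θ m n
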